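/- Let K, W1, W3 be random variables on a probability space with values in finite nonempty sets. If H(W1 | K, W3) = 0, I(W1 ; W3) = 0, and H(K) ≤ H(W1), then H(K | W1, W3) = 0 (K is a function of the pair (W1, W3)). -/

import Mathlib

open MeasureTheory ProbabilityTheory

/-- Shannon entropy (natural logarithm) of a random variable with values in a finite type,
computed from the law `μ.map X`. -/
noncomputable def ent {Ω : Type*} [MeasurableSpace Ω] {S : Type*} [Fintype S] [MeasurableSpace S]
    (μ : Measure Ω) (X : Ω → S) : ℝ :=
  ∑ s : S, Real.negMulLog ((μ.map X) {s}).toReal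

/-- Conditional entropy `H(X | Y) = H(X, Y) - H(Y)`. -/
noncomputable def condEnt {Ω S T : Type*} [MeasurableSpace Ω] [Fintype S] [MeasurableSpace S]
    [Fintype T] [MeasurableSpace T] (μ : Measure Ω) (X : Ω → S) (Y : Ω → T) : ℝ :=
  ent μ (fun ω => (X ω, Y ω)) - ent μ Y

/-- Mutual information `I(X ; Y) = H(X) + H(Y) - H(X, Y)`. -/
noncomputable def mutInfo {Ω S T : Type*} [MeasurableSpace Ω] [Fintype S] [MeasurableSpace S]
    [Fintype T] [MeasurableSpace T] (μ : Measure Ω) (X : Ω → S) (Y : Ω → T) : ℝ :=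
  ent μ X + ent μ Y - ent μ (fun ω => (X ω, Y ω))

/-- Conditional mutual information `I(X ; Y | Z) = H(X | Z) + H(Y | Z) - H(X, Y | Z)`. -/
noncomputable def condMutInfo {Ω S T U : Type*} [MeasurableSpace Ω] [Fintype S] [MeasurableSpace S]
    [Fintype T] [MeasurableSpace T] [Fintype U] [MeasurableSpace U]
    (μ : Measure Ω) (X : Ω → S) (Y : Ω → T) (Z : Ω → U) : ℝ :=
  condEnt μ X Z + condEnt μ Y Z - condEnt μ (fun ω => (X ω, Y ω)) Z

/-!
Since `W₁` is a function of `(K, W₃)`, `H(K, W₁, W₃) = H(K, W₃) ≤ H(K) + H(W₃) ≤ H(W₁) + H(W₃)`,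
and the right-hand side is `H(W₁, W₃)` by independence. But `H(K, W₁, W₃) ≥ H(W₁, W₃)`, so
equality holds throughout and `H(K | W₁, W₃) = 0`.
-/

namespace Real

lemma negMulLog_add_le {x y : ℝ} (hx : 0 ≤ x) (hy : 0 ≤ y) :
    negMulLog (x + y) ≤ negMulLog x + negMulLog y := by
  have key : ∀ {u v : ℝ}, 0 ≤ u → 0 ≤ v → u * log u ≤ u * log (u + v) := by
    intro u v hu hv
    rcases hu.eq_or_lt with rfl | hu
    · simp
    · exact mul_le_mul_of_nonneg_left (log_le_log hu (by linarith)) hu.le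
  simp only [negMulLog, neg_mul, add_mul]
  linarith [key hx hy, add_comm x y ▸ key hy hx]

lemma negMulLog_sum_le {ι : Type*} (s : Finset ι) {f : ι → ℝ} (hf : ∀ i ∈ s, 0 ≤ f i) :
    negMulLog (∑ i ∈ s, f i) ≤ ∑ i ∈ s, negMulLog (f i) := by
  classical
  induction s using Finset.induction_on with
  | empty => simp
  | insert a s ha ih =>
    rw [Finset.sum_insert ha, Finset.sum_insert ha]
    simp only [Finset.mem_insert, forall_eq_or_imp] at hf
    exact (negMulLog_add_le hf.1 (Finset.sum_nonneg hf.2)).trans (by gcongr; exact ih hf.2)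

/-- Gibbs' inequality; `q` need only have total mass at most that of `p`. -/
lemma sum_negMulLog_le_sum_neg_mul_log {ι : Type*} (s : Finset ι) {p q : ι → ℝ}
    (hp : ∀ i ∈ s, 0 ≤ p i) (hq : ∀ i ∈ s, 0 ≤ q i) (hpq : ∀ i ∈ s, 0 < p i → 0 < q i)
    (hsum : ∑ i ∈ s, q i ≤ ∑ i ∈ s, p i) :
    ∑ i ∈ s, negMulLog (p i) ≤ ∑ i ∈ s, -p i * log (q i) := by
  have term : ∀ i ∈ s, negMulLog (p i) ≤ -p i * log (q i) + (q i - p i) := by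
    intro i hi
    rcases (hp i hi).eq_or_lt with h0 | h0
    · simp [← h0, hq i hi]
    · have hqi := hpq i hi h0
      have h := mul_le_mul_of_nonneg_left (log_le_sub_one_of_pos (div_pos hqi h0)) h0.le
      rw [log_div hqi.ne' h0.ne', mul_sub, mul_sub, mul_div_cancel₀ _ h0.ne'] at h
      simp only [negMulLog, neg_mul]
      linarith
  calc ∑ i ∈ s, negMulLog (p i)
      ≤ ∑ i ∈ s, (-p i * log (q i) + (q i - p i)) := Finset.sum_le_sum term
    _ ≤ ∑ i ∈ s, -p i * log (q i) := by
      rw [Finset.sum_add_distrib, Finset.sum_sub_distrib]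
      linarith

end Real

section Entropy

variable {Ω : Type*} [MeasurableSpace Ω] {μ : Measure Ω}
  {S T : Type*} [Fintype S] [MeasurableSpace S] [MeasurableSingletonClass S]
  [MeasurableSpace T] [MeasurableSingletonClass T]

lemma sum_measureReal_map_singleton [IsProbabilityMeasure μ] {X : Ω → S} (hX : Measurable X) :
    ∑ s, (μ.map X).real {s} = 1 := by
  have := Measure.isProbabilityMeasure_map (μ := μ) hX.aemeasurable
  simp

lemma measureReal_map_comp_singleton [IsFiniteMeasure μ] [DecidableEq T] {X : Ω → S}
    (hX : Measurable X) (f : S → T) (t : T) :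
    (μ.map (fun ω => f (X ω))).real {t} = ∑ s with f s = t, (μ.map X).real {s} := by
  rw [← Function.comp_def, ← Measure.map_map (measurable_of_countable f) hX,
    map_measureReal_apply (measurable_of_countable f) (measurableSet_singleton t),
    sum_measureReal_singleton]
  congr 1
  ext s
  simp

variable [Fintype T]

lemma sum_measureReal_map_mul_comp [IsFiniteMeasure μ] {X : Ω → S} (hX : Measurable X)
    (f : S → T) (g : T → ℝ) :
    ∑ s, (μ.map X).real {s} * g (f s) = ∑ t, (μ.map (fun ω => f (X ω))).real {t} * g t := by
  classical
  simp_rw [measureReal_map_comp_singleton hX, Finset.sum_mul]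
  rw [← Finset.sum_fiberwise Finset.univ f]
  refine Finset.sum_congr rfl fun t _ => Finset.sum_congr rfl fun s hs => ?_
  rw [(Finset.mem_filter.1 hs).2]

lemma ent_comp_le [IsFiniteMeasure μ] {X : Ω → S} (hX : Measurable X) (f : S → T) :
    ent μ (fun ω => f (X ω)) ≤ ent μ X := by
  classical
  simp_rw [ent, ← measureReal_def, measureReal_map_comp_singleton hX]
  rw [← Finset.sum_fiberwise Finset.univ f]
  exact Finset.sum_le_sum fun t _ =>
    Real.negMulLog_sum_le _ fun s _ => measureReal_nonneg

lemma ent_eq_of_comp [IsFiniteMeasure μ] {X : Ω → S} {Y : Ω → T}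
    (hX : Measurable X) (hY : Measurable Y) (f : S → T) (g : T → S)
    (hYX : ∀ ω, Y ω = f (X ω)) (hXY : ∀ ω, X ω = g (Y ω)) :
    ent μ X = ent μ Y := by
  have hY' : Y = fun ω => f (X ω) := funext hYX
  have hX' : X = fun ω => g (Y ω) := funext hXY
  refine le_antisymm ?_ ?_
  · conv_lhs => rw [hX']
    exact ent_comp_le hY g
  · conv_lhs => rw [hY']
    exact ent_comp_le hX f

lemma ent_pair_le_add [IsProbabilityMeasure μ] {X : Ω → S} {Y : Ω → T}
    (hX : Measurable X) (hY : Measurable Y) :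
    ent μ (fun ω => (X ω, Y ω)) ≤ ent μ X + ent μ Y := by
  classical
  have hXY : Measurable fun ω => (X ω, Y ω) := hX.prodMk hY
  set p : S × T → ℝ := fun z => (μ.map fun ω => (X ω, Y ω)).real {z}
  set a : S → ℝ := fun s => (μ.map X).real {s}
  set b : T → ℝ := fun t => (μ.map Y).real {t}
  have hpa (z : S × T) : p z ≤ a z.1 := by
    rw [show a z.1 = _ from measureReal_map_comp_singleton hXY Prod.fst z.1]
    exact Finset.single_le_sum (f := p) (fun _ _ => measureReal_nonneg)
      (Finset.mem_filter.2 ⟨Finset.mem_univ z, rfl⟩)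
  have hpb (z : S × T) : p z ≤ b z.2 := by
    rw [show b z.2 = _ from measureReal_map_comp_singleton hXY Prod.snd z.2]
    exact Finset.single_le_sum (f := p) (fun _ _ => measureReal_nonneg)
      (Finset.mem_filter.2 ⟨Finset.mem_univ z, rfl⟩)
  have hmass : ∑ z : S × T, a z.1 * b z.2 ≤ ∑ z, p z := by
    have ha : ∑ s, a s = 1 := sum_measureReal_map_singleton hX
    have hb : ∑ t, b t = 1 := sum_measureReal_map_singleton hY
    have hp : ∑ z, p z = 1 := sum_measureReal_map_singleton hXY
    rw [Fintype.sum_prod_type, ← Finset.sum_mul_sum, ha, hb, hp, one_mul]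
  have hlog (z : S × T) : -p z * Real.log (a z.1 * b z.2) =
      p z * -Real.log (a z.1) + p z * -Real.log (b z.2) := by
    rcases (measureReal_nonneg : 0 ≤ p z).eq_or_lt with h0 | h0
    · simp [show p z = 0 from h0.symm]
    · rw [Real.log_mul (h0.trans_le (hpa z)).ne' (h0.trans_le (hpb z)).ne']
      ring
  calc ent μ (fun ω => (X ω, Y ω))
      ≤ ∑ z, -p z * Real.log (a z.1 * b z.2) :=
        Real.sum_negMulLog_le_sum_neg_mul_log _ (fun _ _ => measureReal_nonneg)
          (fun _ _ => mul_nonneg measureReal_nonneg measureReal_nonneg)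
          (fun z _ hz => mul_pos (hz.trans_le (hpa z)) (hz.trans_le (hpb z))) hmass
    _ = ∑ s, a s * -Real.log (a s) + ∑ t, b t * -Real.log (b t) := by
      rw [Fintype.sum_congr _ _ hlog, Finset.sum_add_distrib]
      exact congr_arg₂ (· + ·)
        (sum_measureReal_map_mul_comp hXY Prod.fst fun s => -Real.log (a s))
        (sum_measureReal_map_mul_comp hXY Prod.snd fun t => -Real.log (b t))
    _ = ent μ X + ent μ Y := by simp only [ent, Real.negMulLog, neg_mul, mul_neg]; rfl

end Entropy

theorem stmt_9_general
    {Ω : Type*} [MeasurableSpace Ω] (μ : Measure Ω) [IsProbabilityMeasure μ]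
    {SK S1 S3 : Type*}
    [Fintype SK] [MeasurableSpace SK] [MeasurableSingletonClass SK]
    [Fintype S1] [MeasurableSpace S1] [MeasurableSingletonClass S1]
    [Fintype S3] [MeasurableSpace S3] [MeasurableSingletonClass S3]
    (K : Ω → SK) (W₁ : Ω → S1) (W₃ : Ω → S3)
    (hK : Measurable K) (hW₁ : Measurable W₁) (hW₃ : Measurable W₃)
    (hfun : condEnt μ W₁ (fun ω => (K ω, W₃ ω)) = 0)
    (hind : mutInfo μ W₁ W₃ = 0)
    (hKle : ent μ K ≤ ent μ W₁) :
    condEnt μ K (fun ω => (W₁ ω, W₃ ω)) = 0 := by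
  unfold condEnt at hfun ⊢
  unfold mutInfo at hind
  have hW₁₃ : Measurable fun ω => (W₁ ω, W₃ ω) := hW₁.prodMk hW₃
  have hreorder : ent μ (fun ω => (K ω, W₁ ω, W₃ ω)) = ent μ (fun ω => (W₁ ω, K ω, W₃ ω)) :=
    ent_eq_of_comp (hK.prodMk hW₁₃) (hW₁.prodMk (hK.prodMk hW₃))
      (fun z => (z.2.1, z.1, z.2.2)) (fun z => (z.2.1, z.1, z.2.2)) (fun _ => rfl) (fun _ => rfl)
  have hsub : ent μ (fun ω => (K ω, W₃ ω)) ≤ ent μ K + ent μ W₃ := ent_pair_le_add hK hW₃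
  have hmono : ent μ (fun ω => (W₁ ω, W₃ ω)) ≤ ent μ (fun ω => (K ω, W₁ ω, W₃ ω)) :=
    ent_comp_le (hK.prodMk hW₁₃) Prod.snd
  linarith

theorem stmt_9
    {Ω : Type*} [MeasurableSpace Ω] (μ : Measure Ω) [IsProbabilityMeasure μ]
    {SK S1 S3 : Type*}
    [Fintype SK] [Nonempty SK] [MeasurableSpace SK] [MeasurableSingletonClass SK]
    [Fintype S1] [Nonempty S1] [MeasurableSpace S1] [MeasurableSingletonClass S1]
    [Fintype S3] [Nonempty S3] [MeasurableSpace S3] [MeasurableSingletonClass S3]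
    (K : Ω → SK) (W₁ : Ω → S1) (W₃ : Ω → S3)
    (hK : Measurable K) (hW₁ : Measurable W₁) (hW₃ : Measurable W₃)
    (hfun : condEnt μ W₁ (fun ω => (K ω, W₃ ω)) = 0)
    (hind : mutInfo μ W₁ W₃ = 0)
    (hKle : ent μ K ≤ ent μ W₁) :
    condEnt μ K (fun ω => (W₁ ω, W₃ ω)) = 0 :=
  stmt_9_general μ K W₁ W₃ hK hW₁ hW₃ hfun hind hKle
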